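/- arXiv:2410.02196 — 4 statements merged into one kernel-verified Lean document; each statement's English description precedes it below -/
import Mathlib

section
/- There exist a finite set Λ of unit vectors in ℝ³ with rational coordinates, a real number ε > 0, for each ξ ∈ Λ two vectors ξ₁, ξ₂ ∈ ℝ³ such that (ξ, ξ₁, ξ₂) is an orthonormal basis of ℝ³, and for each ξ ∈ Λ a smooth strictly positive function γ_ξ defined on the set of skew-symmetric 3×3 real matrices Q with ‖Q‖ < ε, such that every skew-symmetric 3×3 matrix Q with ‖Q‖ < ε admits the decomposition Q = Σ_{ξ∈Λ} (γ_ξ(Q))² (ξ₂⊗ξ₁ − ξ₁⊗ξ₂). -/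
/-- Euclidean inner product on `ℝ³` (as `Fin 3 → ℝ`). -/
def dot3 (a b : Fin 3 → ℝ) : ℝ := ∑ i, a i * b i

/-- Tensor (outer) product of two vectors of `ℝ³`: `(a⊗b)ᵢⱼ = aᵢbⱼ`. -/
def outer (a b : Fin 3 → ℝ) : Fin 3 → Fin 3 → ℝ := fun i j => a i * b j

/-- Frobenius norm of a `3×3` real matrix. -/
noncomputable def frob (Q : Fin 3 → Fin 3 → ℝ) : ℝ := Real.sqrt (∑ i, ∑ j, (Q i j) ^ 2)

/-- A `3×3` real matrix is skew-symmetric. -/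
def IsSkew3 (Q : Fin 3 → Fin 3 → ℝ) : Prop := ∀ i j, Q j i = -(Q i j)

lemma fin3 : (3 : Fin 3) = 0 := rfl

noncomputable def xi1 (ξ : Fin 3 → ℝ) : Fin 3 → ℝ := fun i => |ξ (i + 1)|
noncomputable def xi2 (ξ : Fin 3 → ℝ) : Fin 3 → ℝ :=
  ![ξ 1 * xi1 ξ 2 - ξ 2 * xi1 ξ 1, ξ 2 * xi1 ξ 0 - ξ 0 * xi1 ξ 2, ξ 0 * xi1 ξ 1 - ξ 1 * xi1 ξ 0]

noncomputable def matx (ξ : Fin 3 → ℝ) : Fin 3 → Fin 3 → ℝ :=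
  fun i j => outer (xi2 ξ) (xi1 ξ) i j - outer (xi1 ξ) (xi2 ξ) i j

noncomputable def cc (ξ : Fin 3 → ℝ) (Q : Fin 3 → Fin 3 → ℝ) : ℝ :=
  (1/4) * ∑ i, ∑ j, Q i j * matx ξ i j

noncomputable def gam (ξ : Fin 3 → ℝ) (Q : Fin 3 → Fin 3 → ℝ) : ℝ :=
  Real.sqrt (1 + cc ξ Q)

lemma abs_entry_le_frob (Q : Fin 3 → Fin 3 → ℝ) (i j : Fin 3) : |Q i j| ≤ frob Q := by
  have h1 : (Q i j)^2 ≤ ∑ a, ∑ b, (Q a b)^2 := by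
    have h0 : (Q i j)^2 ≤ ∑ b, (Q i b)^2 :=
      Finset.single_le_sum (f := fun b => (Q i b)^2) (fun b _ => sq_nonneg _) (Finset.mem_univ j)
    exact h0.trans (Finset.single_le_sum (f := fun a => ∑ b, (Q a b)^2)
      (fun a _ => Finset.sum_nonneg fun b _ => sq_nonneg _) (Finset.mem_univ i))
  calc |Q i j| = Real.sqrt ((Q i j)^2) := (Real.sqrt_sq_eq_abs _).symm
    _ ≤ frob Q := Real.sqrt_le_sqrt h1

lemma cc_p0 (Q : Fin 3 → Fin 3 → ℝ) (hQ : IsSkew3 Q) : cc ![1,0,0] Q = Q 2 1 / 2 := by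
  simp [cc, matx, outer, xi1, xi2, Fin.sum_univ_three, fin3]
  rw [hQ 2 1]; ring
lemma cc_m0 (Q : Fin 3 → Fin 3 → ℝ) (hQ : IsSkew3 Q) : cc ![-1,0,0] Q = -(Q 2 1) / 2 := by
  simp [cc, matx, outer, xi1, xi2, Fin.sum_univ_three, fin3]
  rw [hQ 2 1]; ring
lemma cc_p1 (Q : Fin 3 → Fin 3 → ℝ) (hQ : IsSkew3 Q) : cc ![0,1,0] Q = Q 0 2 / 2 := by
  simp [cc, matx, outer, xi1, xi2, Fin.sum_univ_three, fin3]
  rw [hQ 0 2]; ring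
lemma cc_m1 (Q : Fin 3 → Fin 3 → ℝ) (hQ : IsSkew3 Q) : cc ![0,-1,0] Q = -(Q 0 2) / 2 := by
  simp [cc, matx, outer, xi1, xi2, Fin.sum_univ_three, fin3]
  rw [hQ 0 2]; ring
lemma cc_p2 (Q : Fin 3 → Fin 3 → ℝ) (hQ : IsSkew3 Q) : cc ![0,0,1] Q = Q 1 0 / 2 := by
  simp [cc, matx, outer, xi1, xi2, Fin.sum_univ_three, fin3]
  rw [hQ 1 0]; ring
lemma cc_m2 (Q : Fin 3 → Fin 3 → ℝ) (hQ : IsSkew3 Q) : cc ![0,0,-1] Q = -(Q 1 0) / 2 := by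
  simp [cc, matx, outer, xi1, xi2, Fin.sum_univ_three, fin3]
  rw [hQ 1 0]; ring

lemma cc_smooth (ξ : Fin 3 → ℝ) : ContDiff ℝ (⊤ : ℕ∞) (fun Q : Fin 3 → Fin 3 → ℝ => 1 + cc ξ Q) := by
  have hij : ∀ i j : Fin 3, ContDiff ℝ (⊤ : ℕ∞) (fun Q : Fin 3 → Fin 3 → ℝ => Q i j) := by
    intro i j
    exact ((ContinuousLinearMap.proj (R := ℝ) (φ := fun _ : Fin 3 => ℝ) j).contDiff).comp
      ((ContinuousLinearMap.proj (R := ℝ) (φ := fun _ : Fin 3 => Fin 3 → ℝ) i).contDiff)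
  unfold cc
  exact contDiff_const.add (contDiff_const.mul (ContDiff.sum fun i _ =>
    ContDiff.sum fun j _ => (hij i j).mul contDiff_const))

lemma cc_pos (Q : Fin 3 → Fin 3 → ℝ) (hQ : IsSkew3 Q) (hf : frob Q < 1)
    (ξ : Fin 3 → ℝ) (hξ : ξ ∈ ({![1,0,0], ![-1,0,0], ![0,1,0], ![0,-1,0], ![0,0,1], ![0,0,-1]} : Finset (Fin 3 → ℝ))) :
    0 < 1 + cc ξ Q := by
  have b21 := (abs_le.mp ((abs_entry_le_frob Q 2 1).trans hf.le))
  have b02 := (abs_le.mp ((abs_entry_le_frob Q 0 2).trans hf.le))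
  have b10 := (abs_le.mp ((abs_entry_le_frob Q 1 0).trans hf.le))
  simp only [Finset.mem_insert, Finset.mem_singleton] at hξ
  rcases hξ with rfl|rfl|rfl|rfl|rfl|rfl
  · rw [cc_p0 Q hQ]; linarith [b21.1, b21.2]
  · rw [cc_m0 Q hQ]; linarith [b21.1, b21.2]
  · rw [cc_p1 Q hQ]; linarith [b02.1, b02.2]
  · rw [cc_m1 Q hQ]; linarith [b02.1, b02.2]
  · rw [cc_p2 Q hQ]; linarith [b10.1, b10.2]
  · rw [cc_m2 Q hQ]; linarith [b10.1, b10.2]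


/-- First Geometric Lemma: there are finitely many rational unit directions `ξ`, each with an
orthonormal completion `(ξ, ξ₁, ξ₂)`, a radius `ε > 0`, and smooth positive amplitudes `γ_ξ`
on the `ε`-ball of skew-symmetric matrices, such that every skew-symmetric `Q` with
`‖Q‖ < ε` decomposes as `Q = Σ_ξ γ_ξ(Q)² (ξ₂⊗ξ₁ − ξ₁⊗ξ₂)`. -/
theorem geometric_lemma_skew :
    ∃ (Λ : Finset (Fin 3 → ℝ)) (ε : ℝ) (ξ₁ ξ₂ : (Fin 3 → ℝ) → Fin 3 → ℝ)
      (γ : (Fin 3 → ℝ) → (Fin 3 → Fin 3 → ℝ) → ℝ),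
      0 < ε ∧
      (∀ ξ ∈ Λ, ∀ i, ∃ r : ℚ, ξ i = (r : ℝ)) ∧
      (∀ ξ ∈ Λ,
        dot3 ξ ξ = 1 ∧ dot3 (ξ₁ ξ) (ξ₁ ξ) = 1 ∧ dot3 (ξ₂ ξ) (ξ₂ ξ) = 1 ∧
        dot3 ξ (ξ₁ ξ) = 0 ∧ dot3 ξ (ξ₂ ξ) = 0 ∧ dot3 (ξ₁ ξ) (ξ₂ ξ) = 0) ∧
      (∀ ξ ∈ Λ, ContDiffOn ℝ (⊤ : ℕ∞) (γ ξ) {Q | IsSkew3 Q ∧ frob Q < ε}) ∧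
      (∀ ξ ∈ Λ, ∀ Q, IsSkew3 Q → frob Q < ε → 0 < γ ξ Q) ∧
      (∀ Q : Fin 3 → Fin 3 → ℝ, IsSkew3 Q → frob Q < ε →
        Q = ∑ ξ ∈ Λ, (γ ξ Q) ^ 2 • (outer (ξ₂ ξ) (ξ₁ ξ) - outer (ξ₁ ξ) (ξ₂ ξ))) := by
  classical
  refine ⟨{![1,0,0], ![-1,0,0], ![0,1,0], ![0,-1,0], ![0,0,1], ![0,0,-1]}, 1, xi1, xi2, gam,
    one_pos, ?_, ?_, ?_, ?_, ?_⟩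
  · intro ξ hξ i
    simp only [Finset.mem_insert, Finset.mem_singleton] at hξ
    have hr : ∀ x : ℝ, x = 1 ∨ x = 0 ∨ x = -1 → ∃ r : ℚ, x = (r : ℝ) := by
      rintro x (rfl|rfl|rfl)
      exacts [⟨1, by norm_num⟩, ⟨0, by norm_num⟩, ⟨-1, by norm_num⟩]
    rcases hξ with rfl|rfl|rfl|rfl|rfl|rfl <;> fin_cases i <;>
      refine hr _ (by norm_num)
  · intro ξ hξ
    simp only [Finset.mem_insert, Finset.mem_singleton] at hξ
    rcases hξ with rfl|rfl|rfl|rfl|rfl|rfl <;>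
      refine ⟨?_, ?_, ?_, ?_, ?_, ?_⟩ <;>
      simp [dot3, xi1, xi2, Fin.sum_univ_three, fin3]
  · intro ξ hξ Q hQ
    have hpos : 0 < 1 + cc ξ Q := cc_pos Q hQ.1 hQ.2 ξ hξ
    have : ContDiffAt ℝ (⊤ : ℕ∞) (gam ξ) Q := by
      have hs : ContDiffAt ℝ (⊤ : ℕ∞) Real.sqrt (1 + cc ξ Q) :=
        Real.contDiffAt_sqrt (ne_of_gt hpos)
      exact hs.comp Q (cc_smooth ξ).contDiffAt
    exact this.contDiffWithinAt
  · intro ξ hξ Q hQ hf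
    exact Real.sqrt_pos.mpr (cc_pos Q hQ hf ξ hξ)
  · intro Q hQ hf
    have key : ∀ ξ ∈ ({![1,0,0], ![-1,0,0], ![0,1,0], ![0,-1,0], ![0,0,1], ![0,0,-1]} : Finset (Fin 3 → ℝ)),
        (gam ξ Q) ^ 2 = 1 + cc ξ Q := fun ξ hξ =>
      Real.sq_sqrt (cc_pos Q hQ hf ξ hξ).le
    rw [Finset.sum_congr rfl fun ξ hξ => by rw [key ξ hξ]]
    have e1 : (![1,0,0] : Fin 3 → ℝ) ∉ ({![-1,0,0], ![0,1,0], ![0,-1,0], ![0,0,1], ![0,0,-1]} : Finset (Fin 3 → ℝ)) := by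
      norm_num [funext_iff, Fin.forall_fin_succ]
    have e2 : (![-1,0,0] : Fin 3 → ℝ) ∉ ({![0,1,0], ![0,-1,0], ![0,0,1], ![0,0,-1]} : Finset (Fin 3 → ℝ)) := by
      norm_num [funext_iff, Fin.forall_fin_succ]
    have e3 : (![0,1,0] : Fin 3 → ℝ) ∉ ({![0,-1,0], ![0,0,1], ![0,0,-1]} : Finset (Fin 3 → ℝ)) := by
      norm_num [funext_iff, Fin.forall_fin_succ]
    have e4 : (![0,-1,0] : Fin 3 → ℝ) ∉ ({![0,0,1], ![0,0,-1]} : Finset (Fin 3 → ℝ)) := by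
      norm_num [funext_iff, Fin.forall_fin_succ]
    have e5 : (![0,0,1] : Fin 3 → ℝ) ∉ ({![0,0,-1]} : Finset (Fin 3 → ℝ)) := by
      norm_num [funext_iff, Fin.forall_fin_succ]
    rw [Finset.sum_insert e1, Finset.sum_insert e2, Finset.sum_insert e3,
      Finset.sum_insert e4, Finset.sum_insert e5, Finset.sum_singleton]
    rw [cc_p0 Q hQ, cc_m0 Q hQ, cc_p1 Q hQ, cc_m1 Q hQ, cc_p2 Q hQ, cc_m2 Q hQ]
    funext i j
    have h00 := hQ 0 0; have h11 := hQ 1 1; have h22 := hQ 2 2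
    have h01 := hQ 0 1; have h02 := hQ 0 2; have h12 := hQ 1 2
    fin_cases i <;> fin_cases j <;>
      simp [outer, xi1, xi2, fin3] <;> linarith
end

section
/- Let (ξ, ξ₁, ξ₂) be an orthonormal basis of ℝ³, let f, g : ℝ → ℝ be C¹, and let μ ≠ 0. Define the intermittent shear velocity flow W(t,x) = f(ξ₁·x + μt) g(ξ·x) ξ₁ and the intermittent shear magnetic flow D(t,x) = f(ξ₁·x + μt) g(ξ·x) ξ₂. Then for all (t,x): div(W⊗W)(t,x) = μ⁻¹ ∂_t( f(ξ₁·x + μt)² g(ξ·x)² ) ξ₁, div(D⊗W)(t,x) = μ⁻¹ ∂_t( f(ξ₁·x + μt)² g(ξ·x)² ) ξ₂, div(W⊗D)(t,x) = 0, and div(D⊗D)(t,x) = 0, where all divergences are taken in the spatial variable x. -/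
/-!
Both `W` and `D` have the form `φ • a` with the common profile `φ y = f (ξ₁ · y + μ t) g (ξ · y)`, and
`div (φ a ⊗ φ b) = 2 φ (∂_b φ) a`. The gradient of `φ` lies in the span of `ξ₁` and `ξ`, so
orthonormality gives `∂_{ξ₂} φ = 0` and `∂_{ξ₁} φ = f' g`; since time enters `φ` only through
`ξ₁ · y + μ t`, the latter times `2 φ` is `μ⁻¹ ∂_t φ²`.
-/

/-- Partial derivative in the `i`-th coordinate direction of a scalar field on `ℝ³`. -/
noncomputable def pderiv3 (i : Fin 3) (f : (Fin 3 → ℝ) → ℝ) (x : Fin 3 → ℝ) : ℝ :=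
  fderiv ℝ f x (Pi.single i 1)

/-- Divergence (row-wise) of a matrix field on `ℝ³`: `(div M)ⁱ = Σⱼ ∂ⱼ Mⁱʲ`. -/
noncomputable def mdiv (M : (Fin 3 → ℝ) → Fin 3 → Fin 3 → ℝ) (x : Fin 3 → ℝ) (i : Fin 3) : ℝ :=
  ∑ j, pderiv3 j (fun y => M y i j) x

lemma outer_smul_smul (r s : ℝ) (a b : Fin 3 → ℝ) :
    outer (r • a) (s • b) = (r * s) • outer a b := by
  ext i j
  simp only [outer, Pi.smul_apply, smul_eq_mul]
  ring

noncomputable def dot3CLM (a : Fin 3 → ℝ) : (Fin 3 → ℝ) →L[ℝ] ℝ :=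
  ∑ i, a i • ContinuousLinearMap.proj i

@[simp]
lemma dot3CLM_apply (a v : Fin 3 → ℝ) : dot3CLM a v = dot3 a v := by
  simp [dot3CLM, dot3]

lemma hasFDerivAt_dot3 (a x : Fin 3 → ℝ) : HasFDerivAt (dot3 a) (dot3CLM a) x := by
  have h : dot3 a = dot3CLM a := funext fun y => (dot3CLM_apply a y).symm
  rw [h]
  exact (dot3CLM a).hasFDerivAt

lemma sum_pderiv3_mul_eq_fderiv (ψ : (Fin 3 → ℝ) → ℝ) (x v : Fin 3 → ℝ) :
    ∑ j, pderiv3 j ψ x * v j = fderiv ℝ ψ x v := by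
  conv_rhs => rw [pi_eq_sum_univ' v, map_sum]
  simp only [pderiv3, map_smul, smul_eq_mul, mul_comm]

lemma mdiv_smul_outer {ψ : (Fin 3 → ℝ) → ℝ} {x : Fin 3 → ℝ} (hψ : DifferentiableAt ℝ ψ x)
    (a b : Fin 3 → ℝ) (i : Fin 3) :
    mdiv (fun y => ψ y • outer a b) x i = a i * fderiv ℝ ψ x b := by
  have hentry (j : Fin 3) :
      pderiv3 j (fun y => (ψ y • outer a b) i j) x = a i * (pderiv3 j ψ x * b j) := by
    simp only [pderiv3, outer, Pi.smul_apply, smul_eq_mul, fderiv_mul_const hψ, smul_apply]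
    ring
  simp only [mdiv, hentry, ← Finset.mul_sum, sum_pderiv3_mul_eq_fderiv]

lemma mdiv_outer_smul_smul {φ : (Fin 3 → ℝ) → ℝ} {x : Fin 3 → ℝ} (hφ : DifferentiableAt ℝ φ x)
    (a b : Fin 3 → ℝ) (i : Fin 3) :
    mdiv (fun y => outer (φ y • a) (φ y • b)) x i = 2 * φ x * fderiv ℝ φ x b * a i := by
  simp only [outer_smul_smul]
  rw [mdiv_smul_outer (ψ := fun y => φ y * φ y) (hφ.mul hφ), fderiv_fun_mul hφ hφ]
  simp only [add_apply, smul_apply, smul_eq_mul]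
  ring

lemma hasFDerivAt_shear {f g : ℝ → ℝ} (hf : Differentiable ℝ f) (hg : Differentiable ℝ g)
    (ξ ξ₁ : Fin 3 → ℝ) (c : ℝ) (x : Fin 3 → ℝ) :
    HasFDerivAt (fun y => f (dot3 ξ₁ y + c) * g (dot3 ξ y))
      ((deriv f (dot3 ξ₁ x + c) * g (dot3 ξ x)) • dot3CLM ξ₁
        + (f (dot3 ξ₁ x + c) * deriv g (dot3 ξ x)) • dot3CLM ξ) x := by
  have hF := (hf _).hasDerivAt.comp_hasFDerivAt x ((hasFDerivAt_dot3 ξ₁ x).add_const c)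
  have hG := (hg _).hasDerivAt.comp_hasFDerivAt x (hasFDerivAt_dot3 ξ x)
  refine (hF.mul hG).congr_fderiv ?_
  ext v
  simp only [Function.comp_apply, add_apply, smul_apply, dot3CLM_apply, smul_eq_mul]
  ring

lemma deriv_sq_comp_affine_mul_const {f : ℝ → ℝ} (hf : Differentiable ℝ f) (c μ k t : ℝ) :
    deriv (fun s => f (c + μ * s) ^ 2 * k) t
      = 2 * f (c + μ * t) * deriv f (c + μ * t) * μ * k := by
  have hlin : HasDerivAt (fun s : ℝ => c + μ * s) μ t := by
    simpa using ((hasDerivAt_id t).const_mul μ).const_add c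
  have hcomp := (hf (c + μ * t)).hasDerivAt.comp t hlin
  have hsq : HasDerivAt (fun s => f (c + μ * s) ^ 2 * k)
      (2 * f (c + μ * t) ^ (2 - 1) * (deriv f (c + μ * t) * μ) * k) t :=
    (hcomp.pow 2).mul_const k
  rw [hsq.deriv]
  ring

theorem intermittent_shear_flow_div_identities_general
    (ξ ξ₁ ξ₂ : Fin 3 → ℝ)
    (hξ₁ : dot3 ξ₁ ξ₁ = 1)
    (h01 : dot3 ξ ξ₁ = 0) (h02 : dot3 ξ ξ₂ = 0) (h12 : dot3 ξ₁ ξ₂ = 0)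
    (f g : ℝ → ℝ) (hf : ContDiff ℝ 1 f) (hg : ContDiff ℝ 1 g)
    (μ : ℝ) (hμ : μ ≠ 0)
    (W D : ℝ → (Fin 3 → ℝ) → Fin 3 → ℝ)
    (hW : ∀ t x, W t x = (f (dot3 ξ₁ x + μ * t) * g (dot3 ξ x)) • ξ₁)
    (hD : ∀ t x, D t x = (f (dot3 ξ₁ x + μ * t) * g (dot3 ξ x)) • ξ₂) :
    ∀ t x,
      (∀ i, mdiv (fun y => outer (W t y) (W t y)) x i
        = μ⁻¹ * deriv (fun s => f (dot3 ξ₁ x + μ * s) ^ 2 * g (dot3 ξ x) ^ 2) t * ξ₁ i) ∧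
      (∀ i, mdiv (fun y => outer (D t y) (W t y)) x i
        = μ⁻¹ * deriv (fun s => f (dot3 ξ₁ x + μ * s) ^ 2 * g (dot3 ξ x) ^ 2) t * ξ₂ i) ∧
      (∀ i, mdiv (fun y => outer (W t y) (D t y)) x i = 0) ∧
      (∀ i, mdiv (fun y => outer (D t y) (D t y)) x i = 0) := by
  intro t x
  have hf' := hf.differentiable one_ne_zero
  have hg' := hg.differentiable one_ne_zero
  have hφ := hasFDerivAt_shear hf' hg' ξ ξ₁ (μ * t) x
  simp only [hW, hD, mdiv_outer_smul_smul hφ.differentiableAt, hφ.fderiv, add_apply, smul_apply,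
    dot3CLM_apply, smul_eq_mul, deriv_sq_comp_affine_mul_const hf', hξ₁, h01, h02, h12]
  refine ⟨fun i => ?_, fun i => ?_, fun i => ?_, fun i => ?_⟩ <;> field_simp <;> ring

/-- Divergence identities of the intermittent shear building blocks
`W(t,x) = f(ξ₁·x + μt) g(ξ·x) ξ₁` and `D(t,x) = f(ξ₁·x + μt) g(ξ·x) ξ₂`:
`div(W⊗W) = μ⁻¹ ∂_t(f² g²) ξ₁`, `div(D⊗W) = μ⁻¹ ∂_t(f² g²) ξ₂`,
`div(W⊗D) = 0`, and `div(D⊗D) = 0`. -/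
theorem intermittent_shear_flow_div_identities
    (ξ ξ₁ ξ₂ : Fin 3 → ℝ)
    (hξ : dot3 ξ ξ = 1) (hξ₁ : dot3 ξ₁ ξ₁ = 1) (hξ₂ : dot3 ξ₂ ξ₂ = 1)
    (h01 : dot3 ξ ξ₁ = 0) (h02 : dot3 ξ ξ₂ = 0) (h12 : dot3 ξ₁ ξ₂ = 0)
    (f g : ℝ → ℝ) (hf : ContDiff ℝ 1 f) (hg : ContDiff ℝ 1 g)
    (μ : ℝ) (hμ : μ ≠ 0)
    (W D : ℝ → (Fin 3 → ℝ) → Fin 3 → ℝ)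
    (hW : ∀ t x, W t x = (f (dot3 ξ₁ x + μ * t) * g (dot3 ξ x)) • ξ₁)
    (hD : ∀ t x, D t x = (f (dot3 ξ₁ x + μ * t) * g (dot3 ξ x)) • ξ₂) :
    ∀ t x,
      (∀ i, mdiv (fun y => outer (W t y) (W t y)) x i
        = μ⁻¹ * deriv (fun s => f (dot3 ξ₁ x + μ * s) ^ 2 * g (dot3 ξ x) ^ 2) t * ξ₁ i) ∧
      (∀ i, mdiv (fun y => outer (D t y) (W t y)) x i
        = μ⁻¹ * deriv (fun s => f (dot3 ξ₁ x + μ * s) ^ 2 * g (dot3 ξ x) ^ 2) t * ξ₂ i) ∧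
      (∀ i, mdiv (fun y => outer (W t y) (D t y)) x i = 0) ∧
      (∀ i, mdiv (fun y => outer (D t y) (D t y)) x i = 0) :=
  intermittent_shear_flow_div_identities_general ξ ξ₁ ξ₂ hξ₁ h01 h02 h12 f g hf hg μ hμ W D hW hD
end

section
/- Let σ ≥ 1 be an integer, let m < n be nonnegative integers, let f : ℝ → ℝ be 1-periodic, integrable on [0,1], and mean-zero (∫₀¹ f(s) ds = 0), and let a : [m/σ, n/σ] → ℝ be Lipschitz with Lipschitz constant K. Then |∫_{m/σ}^{n/σ} a(t) f(σt) dt| ≤ ((n − m)/σ²) · K · ∫₀¹ |f(s)| ds. -/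
/-!
Cut `[m/σ, n/σ]` into the `n - m` periods `[k/σ, (k+1)/σ]` of `t ↦ f (σ t)`. On each period
`f (σ ·)` has mean zero, so `a` may be replaced by `a - a (k/σ)`, which is at most `K/σ` there,
while `∫ |f (σ t)| dt` over a period is `σ⁻¹ ∫₀¹ |f|`. Summing the `n - m` bounds
`K/σ² ∫₀¹ |f|` gives the estimate.
-/

open MeasureTheory Set Function intervalIntegral
open scoped NNReal

theorem abs_integral_mul_le_of_integral_eq_zero {a g : ℝ → ℝ} {c d M : ℝ} (hcd : c ≤ d)
    (ha : ContinuousOn a (Icc c d)) (hg : IntervalIntegrable g volume c d)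
    (hg0 : ∫ t in c..d, g t = 0) (hM : ∀ t ∈ Icc c d, |a t - a c| ≤ M) :
    |∫ t in c..d, a t * g t| ≤ M * ∫ t in c..d, |g t| := by
  rw [← uIcc_of_le hcd] at ha
  have hag : IntervalIntegrable (fun t => a t * g t) volume c d := hg.continuousOn_mul ha
  have hacg : IntervalIntegrable (fun t => (a t - a c) * g t) volume c d :=
    hg.continuousOn_mul (ha.sub continuousOn_const)
  have hcentered : ∫ t in c..d, (a t - a c) * g t = ∫ t in c..d, a t * g t := by
    simp only [sub_mul]
    rw [integral_sub hag (hg.const_mul _), intervalIntegral.integral_const_mul, hg0, mul_zero,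
      sub_zero]
  rw [← hcentered]
  calc |∫ t in c..d, (a t - a c) * g t|
      ≤ ∫ t in c..d, |(a t - a c) * g t| := abs_integral_le_integral_abs hcd
    _ ≤ ∫ t in c..d, M * |g t| := by
        refine integral_mono_on hcd hacg.abs (hg.abs.const_mul M) fun t ht => ?_
        rw [abs_mul]
        exact mul_le_mul_of_nonneg_right (hM t ht) (abs_nonneg _)
    _ = M * ∫ t in c..d, |g t| := intervalIntegral.integral_const_mul _ _

theorem Function.Periodic.intervalIntegral_comp_mul_div {E : Type*} [NormedAddCommGroup E]
    [NormedSpace ℝ E] {f : ℝ → E} (hf : Periodic f 1) {σ : ℝ} (hσ : σ ≠ 0) (x : ℝ) :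
    ∫ t in x / σ..(x + 1) / σ, f (σ * t) = σ⁻¹ • ∫ s in (0 : ℝ)..1, f s := by
  rw [integral_comp_mul_left f hσ, mul_div_cancel₀ _ hσ, mul_div_cancel₀ _ hσ,
    hf.intervalIntegral_add_eq x 0, zero_add]

theorem norm_integral_le_of_norm_integral_adjacent_le {E : Type*} [NormedAddCommGroup E]
    [NormedSpace ℝ E] {g : ℝ → E} {p : ℕ → ℝ} {N : ℕ} {B : ℝ}
    (hg : ∀ k < N, IntervalIntegrable g volume (p k) (p (k + 1)))
    (hB : ∀ k < N, ‖∫ t in p k..p (k + 1), g t‖ ≤ B) :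
    ‖∫ t in p 0..p N, g t‖ ≤ N * B := by
  rw [← sum_integral_adjacent_intervals hg]
  calc ‖∑ k ∈ Finset.range N, ∫ t in p k..p (k + 1), g t‖
      ≤ ∑ k ∈ Finset.range N, ‖∫ t in p k..p (k + 1), g t‖ := norm_sum_le _ _
    _ ≤ ∑ _k ∈ Finset.range N, B := Finset.sum_le_sum fun k hk => hB k (Finset.mem_range.1 hk)
    _ = N * B := by simp

section PeriodicMeanZero

variable {f a : ℝ → ℝ} {K : ℝ≥0} {σ : ℝ}

theorem abs_integral_mul_comp_mul_le_of_lipschitzOnWith_period (hσ : 0 < σ) (hf : Periodic f 1)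
    (hint : IntervalIntegrable f volume 0 1) (hmean : ∫ s in (0 : ℝ)..1, f s = 0) {x : ℝ}
    (ha : LipschitzOnWith K a (Icc (x / σ) ((x + 1) / σ))) :
    |∫ t in x / σ..(x + 1) / σ, a t * f (σ * t)| ≤ K / σ ^ 2 * ∫ s in (0 : ℝ)..1, |f s| := by
  have hwidth : (x + 1) / σ - x / σ = 1 / σ := by ring
  have hle : x / σ ≤ (x + 1) / σ := div_le_div_of_nonneg_right (by linarith) hσ.le
  have hg : IntervalIntegrable (fun t => f (σ * t)) volume (x / σ) ((x + 1) / σ) :=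
    (hf.intervalIntegrable₀ one_ne_zero hint x (x + 1)).comp_mul_left
  have hM : ∀ t ∈ Icc (x / σ) ((x + 1) / σ), |a t - a (x / σ)| ≤ K / σ := fun t ht => by
    calc |a t - a (x / σ)| ≤ K * |t - x / σ| := by
          simpa only [Real.dist_eq] using ha.dist_le_mul t ht _ (left_mem_Icc.2 hle)
      _ ≤ K * (1 / σ) := by
          gcongr
          rw [abs_of_nonneg (by linarith [ht.1])]
          linarith [ht.2]
      _ = K / σ := by ring
  calc |∫ t in x / σ..(x + 1) / σ, a t * f (σ * t)|
      ≤ K / σ * ∫ t in x / σ..(x + 1) / σ, |f (σ * t)| :=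
        abs_integral_mul_le_of_integral_eq_zero hle ha.continuousOn hg
          (by rw [hf.intervalIntegral_comp_mul_div hσ.ne', hmean, smul_zero]) hM
    _ = K / σ ^ 2 * ∫ s in (0 : ℝ)..1, |f s| := by
        have habs : Periodic (fun s => |f s|) 1 := hf.comp abs
        rw [habs.intervalIntegral_comp_mul_div hσ.ne', smul_eq_mul]
        field_simp

theorem abs_integral_mul_comp_mul_le_of_lipschitzOnWith (hσ : 0 < σ) (hf : Periodic f 1)
    (hint : IntervalIntegrable f volume 0 1) (hmean : ∫ s in (0 : ℝ)..1, f s = 0) (x : ℝ)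
    (N : ℕ) (ha : LipschitzOnWith K a (Icc (x / σ) ((x + N) / σ))) :
    |∫ t in x / σ..(x + N) / σ, a t * f (σ * t)|
      ≤ N * (K / σ ^ 2 * ∫ s in (0 : ℝ)..1, |f s|) := by
  have hcell : ∀ k < N, LipschitzOnWith K a (Icc ((x + k) / σ) ((x + k + 1) / σ)) := by
    intro k hk
    have hkN : (k : ℝ) + 1 ≤ N := by exact_mod_cast hk
    exact ha.mono (Icc_subset_Icc (div_le_div_of_nonneg_right (by simp) hσ.le)
      (div_le_div_of_nonneg_right (by linarith) hσ.le))
  have hp : ∀ k : ℕ, (x + ↑(k + 1)) / σ = (x + k + 1) / σ := fun k => by push_cast; ring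
  have hint_cell : ∀ k < N, IntervalIntegrable (fun t => a t * f (σ * t)) volume
      ((x + k) / σ) ((x + ↑(k + 1)) / σ) := fun k hk => by
    rw [hp]
    refine ((hf.intervalIntegrable₀ one_ne_zero hint _ _).comp_mul_left).continuousOn_mul ?_
    rw [uIcc_of_le (div_le_div_of_nonneg_right (by linarith) hσ.le)]
    exact (hcell k hk).continuousOn
  simpa using norm_integral_le_of_norm_integral_adjacent_le (p := fun k => (x + k) / σ) (N := N)
    hint_cell fun k hk => by
      simpa only [Real.norm_eq_abs, hp] using
        abs_integral_mul_comp_mul_le_of_lipschitzOnWith_period hσ hf hint hmean (hcell k hk)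

end PeriodicMeanZero

/-- Decorrelation estimate: if `f` is `1`-periodic, integrable and mean-zero on `[0,1]`,
and `a` is `K`-Lipschitz on `[m/σ, n/σ]`, then
`|∫_{m/σ}^{n/σ} a(t) f(σt) dt| ≤ ((n−m)/σ²)·K·∫₀¹ |f|`. -/
theorem fast_oscillation_decorrelation
    (σ : ℕ) (hσ : 1 ≤ σ) (m n : ℕ) (hmn : m < n)
    (f : ℝ → ℝ)
    (hper : ∀ s, f (s + 1) = f s)
    (hint : IntegrableOn f (Set.Icc (0 : ℝ) 1))
    (hmean : (∫ s in (0 : ℝ)..1, f s) = 0)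
    (a : ℝ → ℝ) (K : ℝ)
    (hlip : ∀ t ∈ Set.Icc ((m : ℝ) / σ) ((n : ℝ) / σ),
      ∀ t' ∈ Set.Icc ((m : ℝ) / σ) ((n : ℝ) / σ), |a t - a t'| ≤ K * |t - t'|) :
    |∫ t in ((m : ℝ) / σ)..((n : ℝ) / σ), a t * f ((σ : ℝ) * t)|
      ≤ (((n : ℝ) - m) / (σ : ℝ) ^ 2) * K * ∫ s in (0 : ℝ)..1, |f s| := by
  have hσ' : (0 : ℝ) < σ := by exact_mod_cast hσ
  have hlt : (m : ℝ) / σ < n / σ := div_lt_div_of_pos_right (by exact_mod_cast hmn) hσ'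
  have hK : 0 ≤ K := by
    have hend := hlip _ (left_mem_Icc.2 hlt.le) _ (right_mem_Icc.2 hlt.le)
    exact nonneg_of_mul_nonneg_left ((abs_nonneg _).trans hend)
      (abs_pos.2 (sub_ne_zero.2 hlt.ne))
  have hLip : LipschitzOnWith K.toNNReal a (Icc ((m : ℝ) / σ) (n / σ)) :=
    .of_dist_le' fun t ht t' ht' => by simpa only [Real.dist_eq] using hlip t ht t' ht'
  obtain ⟨N, rfl⟩ : ∃ N, n = m + N := ⟨n - m, by omega⟩
  push_cast at hLip ⊢
  have hbound := abs_integral_mul_comp_mul_le_of_lipschitzOnWith hσ' hper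
    ((intervalIntegrable_iff_integrableOn_Icc_of_le zero_le_one).2 hint) hmean m N hLip
  rw [Real.coe_toNNReal K hK] at hbound
  convert hbound using 1
  ring
end

section
/- For every q ∈ [1, ∞) there is a constant C > 0 (depending only on q) with the following property: for every integer σ ≥ 1, all nonnegative integers m < n, every 1-periodic f : ℝ → ℝ with |f|^q integrable on [0,1], and every bounded Lipschitz a : [m/σ, n/σ] → ℝ, one has | (∫_{m/σ}^{n/σ} |a(t) f(σt)|^q dt)^{1/q} − (∫_{m/σ}^{n/σ} |a(t)|^q dt)^{1/q} · (∫₀¹ |f(s)|^q ds)^{1/q} | ≤ C σ^{−1/q} ((n−m)/σ)^{1/q} ‖a‖_{C^{0,1}} (∫₀¹ |f(s)|^q ds)^{1/q}, where ‖a‖_{C^{0,1}} is the sum of the supremum of |a| and a Lipschitz constant of a. -/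
/-! Cut `[m/σ, n/σ]` into the `n - m` cells `[(m+i)/σ, (m+i+1)/σ]`, on each of which
`t ↦ f (σ t)` runs through exactly one period. Freezing `w = |a|^q` at the left end of each cell
costs at most `q M^(q-1) K / σ` pointwise (mean value theorem), so `∫ w(t) |f(σt)|^q` and
`∫ w · ∫₀¹ |f|^q` are both within `(q M^(q-1) K / σ) ((n-m)/σ) ∫₀¹ |f|^q` of the same Riemann sum
`(∑ᵢ w((m+i)/σ) / σ) ∫₀¹ |f|^q`. Subadditivity `|x^(1/q) - y^(1/q)| ≤ |x - y|^(1/q)` carries this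
over to `q`-th roots, and `(q M^(q-1) K)^(1/q) ≤ q (M + K)`. -/

open MeasureTheory Set intervalIntegral

namespace Real

lemma abs_rpow_sub_rpow_le_mul_abs_sub {q M u v : ℝ} (hq : 1 ≤ q) (hu : 0 ≤ u) (hv : 0 ≤ v)
    (huM : u ≤ M) (hvM : v ≤ M) : |u ^ q - v ^ q| ≤ q * M ^ (q - 1) * |u - v| := by
  have hderiv : ∀ x ∈ Icc 0 M,
      HasDerivWithinAt (fun x : ℝ => x ^ q) (q * x ^ (q - 1)) (Icc 0 M) x :=
    fun x _ => (hasDerivAt_rpow_const (Or.inr hq)).hasDerivWithinAt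
  have hbound : ∀ x ∈ Icc 0 M, ‖q * x ^ (q - 1)‖ ≤ q * M ^ (q - 1) := fun x hx => by
    have := rpow_nonneg hx.1 (q - 1)
    rw [norm_of_nonneg (by positivity)]
    exact mul_le_mul_of_nonneg_left (rpow_le_rpow hx.1 hx.2 (by linarith)) (by linarith)
  simpa using (convex_Icc 0 M).norm_image_sub_le_of_norm_hasDerivWithin_le hderiv hbound
    ⟨hv, hvM⟩ ⟨hu, huM⟩

lemma abs_rpow_sub_rpow_le_abs_sub_rpow {p x y : ℝ} (hx : 0 ≤ x) (hy : 0 ≤ y) (hp0 : 0 ≤ p)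
    (hp1 : p ≤ 1) : |x ^ p - y ^ p| ≤ |x - y| ^ p := by
  wlog hyx : y ≤ x generalizing x y
  · rw [abs_sub_comm, abs_sub_comm x]
    exact this hy hx (le_of_not_ge hyx)
  have hsub : x ^ p ≤ y ^ p + (x - y) ^ p := by
    simpa using rpow_add_le_add_rpow hy (sub_nonneg.2 hyx) hp0 hp1
  rw [abs_of_nonneg (sub_nonneg.2 (rpow_le_rpow hy hyx hp0)), abs_of_nonneg (sub_nonneg.2 hyx)]
  linarith

lemma abs_rpow_sub_rpow_mul_rpow_le {p X A s F E : ℝ} (hp0 : 0 ≤ p) (hp1 : p ≤ 1)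
    (hX : 0 ≤ X) (hA : 0 ≤ A) (hs : 0 ≤ s) (hF : 0 ≤ F)
    (hXs : |X - s * F| ≤ E * F) (hAs : |A - s| ≤ E) :
    |X ^ p - A ^ p * F ^ p| ≤ 2 * E ^ p * F ^ p := by
  have hE : 0 ≤ E := (abs_nonneg _).trans hAs
  have hX' : |X ^ p - (s * F) ^ p| ≤ E ^ p * F ^ p :=
    calc |X ^ p - (s * F) ^ p| ≤ |X - s * F| ^ p :=
          abs_rpow_sub_rpow_le_abs_sub_rpow hX (by positivity) hp0 hp1
      _ ≤ (E * F) ^ p := by gcongr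
      _ = E ^ p * F ^ p := mul_rpow hE hF
  have hA' : |s ^ p - A ^ p| ≤ E ^ p :=
    calc |s ^ p - A ^ p| ≤ |s - A| ^ p := abs_rpow_sub_rpow_le_abs_sub_rpow hs hA hp0 hp1
      _ ≤ E ^ p := by rw [abs_sub_comm]; gcongr
  have hFp : 0 ≤ F ^ p := rpow_nonneg hF p
  calc |X ^ p - A ^ p * F ^ p| = |(X ^ p - (s * F) ^ p) + (s ^ p - A ^ p) * F ^ p| := by
        rw [mul_rpow hs hF]; ring_nf
    _ ≤ |X ^ p - (s * F) ^ p| + |s ^ p - A ^ p| * F ^ p := by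
        rw [← abs_of_nonneg hFp, ← abs_mul, abs_of_nonneg hFp]; exact abs_add_le _ _
    _ ≤ E ^ p * F ^ p + E ^ p * F ^ p := by gcongr
    _ = 2 * E ^ p * F ^ p := by ring

lemma rpow_one_div_mul_rpow_sub_one_mul_le {q M K : ℝ} (hq : 1 ≤ q) (hM : 0 ≤ M) (hK : 0 ≤ K) :
    (q * M ^ (q - 1) * K) ^ (1 / q) ≤ q * (M + K) := by
  have hq0 : 0 < q := by linarith
  have hMK0 : 0 ≤ M + K := by positivity
  have hbase : q * M ^ (q - 1) * K ≤ q * (M + K) ^ q := by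
    rw [show q = (q - 1) + 1 by ring, rpow_add' hMK0 (by simpa using hq0.ne'), rpow_one,
      add_sub_cancel_right, mul_assoc]
    gcongr
    · linarith
    · linarith
  calc (q * M ^ (q - 1) * K) ^ (1 / q) ≤ (q * (M + K) ^ q) ^ (1 / q) := by gcongr
    _ = q ^ (1 / q) * (M + K) := by
        rw [mul_rpow hq0.le (by positivity), ← rpow_mul hMK0, mul_one_div_cancel hq0.ne', rpow_one]
    _ ≤ q * (M + K) := by
        gcongr
        calc q ^ (1 / q) ≤ q ^ (1 : ℝ) :=
              rpow_le_rpow_of_exponent_le hq ((div_le_one hq0).2 hq)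
          _ = q := rpow_one q

lemma rpow_one_div_mul_rpow_sub_one_mul_div_mul_le {q M K σ ℓ : ℝ} (hq : 1 ≤ q) (hM : 0 ≤ M)
    (hK : 0 ≤ K) (hσ : 0 ≤ σ) (hℓ : 0 ≤ ℓ) :
    (q * M ^ (q - 1) * K / σ * ℓ) ^ (1 / q) ≤ q * σ ^ (-(1 / q)) * ℓ ^ (1 / q) * (M + K) := by
  have hL : 0 ≤ q * M ^ (q - 1) * K := by
    have := rpow_nonneg hM (q - 1); have : (0 : ℝ) ≤ q := by linarith
    positivity
  rw [mul_rpow (div_nonneg hL hσ) hℓ, div_rpow hL hσ, rpow_neg hσ, div_eq_mul_inv]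
  have := rpow_one_div_mul_rpow_sub_one_mul_le hq hM hK
  have : 0 ≤ (σ ^ (1 / q))⁻¹ := by positivity
  have : 0 ≤ ℓ ^ (1 / q) := rpow_nonneg hℓ _
  calc (q * M ^ (q - 1) * K) ^ (1 / q) * (σ ^ (1 / q))⁻¹ * ℓ ^ (1 / q)
      ≤ q * (M + K) * (σ ^ (1 / q))⁻¹ * ℓ ^ (1 / q) := by gcongr
    _ = q * (σ ^ (1 / q))⁻¹ * ℓ ^ (1 / q) * (M + K) := by ring

end Real

lemma abs_integral_mul_sub_mul_integral_le {w g : ℝ → ℝ} {a b c D : ℝ} (hab : a ≤ b)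
    (hwg : IntervalIntegrable (fun t => w t * g t) volume a b)
    (hg : IntervalIntegrable g volume a b) (hg0 : ∀ t ∈ Icc a b, 0 ≤ g t)
    (hw : ∀ t ∈ Icc a b, |w t - c| ≤ D) :
    |(∫ t in a..b, w t * g t) - c * ∫ t in a..b, g t| ≤ D * ∫ t in a..b, g t := by
  rw [← intervalIntegral.integral_const_mul, ← integral_sub hwg (hg.const_mul c),
    ← intervalIntegral.integral_const_mul]
  refine (abs_integral_le_integral_abs hab).trans <|
    integral_mono_on hab (hwg.sub (hg.const_mul c)).abs (hg.const_mul D) fun t ht => ?_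
  rw [← sub_mul, abs_mul, abs_of_nonneg (hg0 t ht)]
  exact mul_le_mul_of_nonneg_right (hw t ht) (hg0 t ht)

lemma abs_integral_mul_sub_sum_le {w g : ℝ → ℝ} {u : ℕ → ℝ} {N : ℕ} {D : ℝ} (hu : Monotone u)
    (hwg : IntervalIntegrable (fun t => w t * g t) volume (u 0) (u N))
    (hg : IntervalIntegrable g volume (u 0) (u N)) (hg0 : ∀ t ∈ Icc (u 0) (u N), 0 ≤ g t)
    (hw : ∀ i < N, ∀ t ∈ Icc (u i) (u (i + 1)), |w t - w (u i)| ≤ D) :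
    |(∫ t in u 0..u N, w t * g t) - ∑ i ∈ Finset.range N, w (u i) * ∫ t in u i..u (i + 1), g t|
      ≤ D * ∫ t in u 0..u N, g t := by
  have hcell : ∀ i < N, Icc (u i) (u (i + 1)) ⊆ Icc (u 0) (u N) := fun i hi =>
    Icc_subset_Icc (hu (Nat.zero_le i)) (hu hi)
  have hint : ∀ {φ : ℝ → ℝ}, IntervalIntegrable φ volume (u 0) (u N) →
      ∀ i < N, IntervalIntegrable φ volume (u i) (u (i + 1)) := fun h i hi =>
    h.mono_set <| by
      rw [uIcc_of_le (hu (Nat.zero_le N)), uIcc_of_le (hu i.le_succ)]; exact hcell i hi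
  rw [← sum_integral_adjacent_intervals (hint hwg), ← sum_integral_adjacent_intervals (hint hg),
    Finset.mul_sum, ← Finset.sum_sub_distrib]
  refine (Finset.abs_sum_le_sum_abs _ _).trans (Finset.sum_le_sum fun i hi => ?_)
  have hi := Finset.mem_range.1 hi
  exact abs_integral_mul_sub_mul_integral_le (hu i.le_succ) (hint hwg i hi) (hint hg i hi)
    (fun t ht => hg0 t (hcell i hi ht)) (hw i hi)

lemma Function.Periodic.integral_comp_mul_div {g : ℝ → ℝ} (hg : Function.Periodic g 1)
    (hg01 : IntervalIntegrable g volume 0 1) {σ : ℝ} (hσ : σ ≠ 0) (k : ℝ) (N : ℕ) :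
    ∫ t in k / σ..(k + N) / σ, g (σ * t) = N * (∫ s in (0 : ℝ)..1, g s) / σ := by
  have h := hg.intervalIntegral_add_zsmul_eq N k (hg.intervalIntegrable₀ one_ne_zero hg01)
  simp only [zsmul_eq_mul, Int.cast_natCast, mul_one, hg.intervalIntegral_add_eq k 0,
    zero_add] at h
  rw [integral_comp_mul_left g hσ, mul_div_cancel₀ _ hσ, mul_div_cancel₀ _ hσ, h, smul_eq_mul,
    inv_mul_eq_div]

lemma abs_sub_le_div_of_mem_cell {w : ℝ → ℝ} {σ x₀ L t : ℝ} {N i : ℕ}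
    (hσ : 0 < σ) (hL : 0 ≤ L)
    (hw : ∀ t ∈ Icc (x₀ / σ) ((x₀ + N) / σ), ∀ t' ∈ Icc (x₀ / σ) ((x₀ + N) / σ),
      |w t - w t'| ≤ L * |t - t'|)
    (hi : i < N) (ht : t ∈ Icc ((x₀ + i) / σ) ((x₀ + i + 1) / σ)) :
    |w t - w ((x₀ + i) / σ)| ≤ L / σ := by
  have hiN : (i : ℝ) + 1 ≤ N := by exact_mod_cast hi
  have hleft : (x₀ + i) / σ ∈ Icc (x₀ / σ) ((x₀ + N) / σ) := by
    constructor <;> gcongr; linarith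
  have ht' : t ∈ Icc (x₀ / σ) ((x₀ + N) / σ) :=
    ⟨hleft.1.trans ht.1, ht.2.trans (div_le_div_of_nonneg_right (by linarith) hσ.le)⟩
  have hdist : |t - (x₀ + i) / σ| ≤ 1 / σ := by
    rw [abs_of_nonneg (sub_nonneg.2 ht.1)]
    have := ht.2
    rw [add_div _ 1] at this
    linarith
  calc |w t - w ((x₀ + i) / σ)| ≤ L * |t - (x₀ + i) / σ| := hw t ht' _ hleft
    _ ≤ L * (1 / σ) := by gcongr
    _ = L / σ := by ring

lemma abs_integral_mul_comp_mul_sub_le {w g : ℝ → ℝ} {σ x₀ L : ℝ} {N : ℕ} (hσ : 0 < σ)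
    (hg : Function.Periodic g 1) (hg01 : IntervalIntegrable g volume 0 1) (hg0 : ∀ s, 0 ≤ g s)
    (hL : 0 ≤ L) (hw : ∀ t ∈ Icc (x₀ / σ) ((x₀ + N) / σ), ∀ t' ∈ Icc (x₀ / σ) ((x₀ + N) / σ),
      |w t - w t'| ≤ L * |t - t'|) :
    |(∫ t in x₀ / σ..(x₀ + N) / σ, w t * g (σ * t))
        - (∑ i ∈ Finset.range N, w ((x₀ + i) / σ) / σ) * ∫ s in (0 : ℝ)..1, g s|
      ≤ L / σ * (N / σ) * ∫ s in (0 : ℝ)..1, g s := by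
  set F := ∫ s in (0 : ℝ)..1, g s
  set u : ℕ → ℝ := fun i => (x₀ + i) / σ
  have hu : Monotone u := fun i j hij => by
    simp only [u]; gcongr
  have hsucc : ∀ i, u (i + 1) = (x₀ + i + 1) / σ := fun i => by simp [u, add_assoc]
  have hu0 : u 0 = x₀ / σ := by simp [u]
  have huN : u N = (x₀ + N) / σ := rfl
  have hcell : ∀ i, ∫ t in u i..u (i + 1), g (σ * t) = F / σ := fun i => by
    simpa [hsucc] using hg.integral_comp_mul_div hg01 hσ.ne' (x₀ + i) 1
  have hgσ : IntervalIntegrable (fun t => g (σ * t)) volume (u 0) (u N) := by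
    simpa [mul_div_cancel_left₀ _ hσ.ne'] using
      (hg.intervalIntegrable₀ one_ne_zero hg01 (σ * u 0) (σ * u N)).comp_mul_left (c := σ)
  have hcont : ContinuousOn w (uIcc (u 0) (u N)) := by
    rw [uIcc_of_le (hu (Nat.zero_le N)), hu0, huN]
    exact (LipschitzOnWith.of_dist_le' (K := L) fun t ht t' ht' => by
      simpa only [Real.dist_eq] using hw t ht t' ht').continuousOn
  have key := abs_integral_mul_sub_sum_le hu (hgσ.continuousOn_mul hcont) hgσ
    (fun t _ => hg0 _) fun i hi t ht =>
      abs_sub_le_div_of_mem_cell hσ hL hw hi (by rwa [hsucc] at ht)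
  rw [hu0, huN, hg.integral_comp_mul_div hg01 hσ.ne' x₀ N] at key
  simp only [hcell] at key
  have hsum : (∑ i ∈ Finset.range N, w ((x₀ + i) / σ) / σ) * F
      = ∑ i ∈ Finset.range N, w (u i) * (F / σ) := by
    rw [Finset.sum_mul]; exact Finset.sum_congr rfl fun i _ => by ring
  rw [hsum]
  exact key.trans_eq (by ring)

lemma abs_rpow_integral_mul_comp_mul_sub_le {w g : ℝ → ℝ} {σ x₀ L p : ℝ} {N : ℕ} (hσ : 0 < σ)
    (hp0 : 0 ≤ p) (hp1 : p ≤ 1) (hg : Function.Periodic g 1)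
    (hg01 : IntervalIntegrable g volume 0 1) (hg0 : ∀ s, 0 ≤ g s) (hw0 : ∀ t, 0 ≤ w t)
    (hL : 0 ≤ L) (hw : ∀ t ∈ Icc (x₀ / σ) ((x₀ + N) / σ), ∀ t' ∈ Icc (x₀ / σ) ((x₀ + N) / σ),
      |w t - w t'| ≤ L * |t - t'|) :
    |(∫ t in x₀ / σ..(x₀ + N) / σ, w t * g (σ * t)) ^ p
        - (∫ t in x₀ / σ..(x₀ + N) / σ, w t) ^ p * (∫ s in (0 : ℝ)..1, g s) ^ p|
      ≤ 2 * (L / σ * (N / σ)) ^ p * (∫ s in (0 : ℝ)..1, g s) ^ p := by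
  have hX := abs_integral_mul_comp_mul_sub_le hσ hg hg01 hg0 hL hw
  have hA := abs_integral_mul_comp_mul_sub_le (g := fun _ => 1) hσ (fun _ => rfl)
    intervalIntegrable_const (fun _ => zero_le_one) hL hw
  simp only [mul_one, integral_one, sub_zero] at hA
  have hx₀N : x₀ / σ ≤ (x₀ + N) / σ := by gcongr; exact le_add_of_nonneg_right N.cast_nonneg
  exact Real.abs_rpow_sub_rpow_mul_rpow_le hp0 hp1
    (integral_nonneg hx₀N fun t _ => mul_nonneg (hw0 t) (hg0 _))
    (integral_nonneg hx₀N fun t _ => hw0 t)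
    (Finset.sum_nonneg fun i _ => div_nonneg (hw0 _) hσ.le)
    (integral_nonneg zero_le_one fun s _ => hg0 s) hX hA

lemma abs_abs_rpow_sub_abs_rpow_le {a : ℝ → ℝ} {S : Set ℝ} {q M K : ℝ} (hq : 1 ≤ q)
    (hM : ∀ t ∈ S, |a t| ≤ M) (hK : ∀ t ∈ S, ∀ t' ∈ S, |a t - a t'| ≤ K * |t - t'|) :
    ∀ t ∈ S, ∀ t' ∈ S, |(|a t| ^ q - |a t'| ^ q)| ≤ q * M ^ (q - 1) * K * |t - t'| := by
  intro t ht t' ht'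
  have hM0 : 0 ≤ M := (abs_nonneg _).trans (hM t ht)
  have : 0 ≤ q * M ^ (q - 1) := mul_nonneg (by linarith) (Real.rpow_nonneg hM0 _)
  calc |(|a t| ^ q - |a t'| ^ q)| ≤ q * M ^ (q - 1) * |(|a t| - |a t'|)| :=
        Real.abs_rpow_sub_rpow_le_mul_abs_sub hq (abs_nonneg _) (abs_nonneg _) (hM t ht) (hM t' ht')
    _ ≤ q * M ^ (q - 1) * (K * |t - t'|) := by
        gcongr
        exact (abs_abs_sub_abs_le_abs_sub _ _).trans (hK t ht t' ht')
    _ = q * M ^ (q - 1) * K * |t - t'| := by ring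

/-- Improved Hölder (decorrelation) inequality in one dimension: for every `q ∈ [1,∞)`
there is `C > 0` such that for every integer `σ ≥ 1`, nonnegative integers `m < n`,
`1`-periodic `f` with `|f|^q` integrable on `[0,1]`, and every `a` bounded by `M` and
`K`-Lipschitz on `[m/σ, n/σ]`,
`| ‖a f(σ·)‖_{L^q(m/σ,n/σ)} − ‖a‖_{L^q(m/σ,n/σ)} ‖f‖_{L^q(0,1)} |
  ≤ C σ^{−1/q} ((n−m)/σ)^{1/q} (M+K) ‖f‖_{L^q(0,1)}`. -/
theorem improved_holder_decorrelation (q : ℝ) (hq : 1 ≤ q) :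
    ∃ C : ℝ, 0 < C ∧
      ∀ (σ : ℕ), 1 ≤ σ → ∀ (m n : ℕ), m < n →
      ∀ (f a : ℝ → ℝ),
        (∀ s, f (s + 1) = f s) →
        IntegrableOn (fun s => |f s| ^ q) (Set.Icc (0 : ℝ) 1) →
      ∀ M K : ℝ,
        (∀ t ∈ Set.Icc ((m : ℝ) / σ) ((n : ℝ) / σ), |a t| ≤ M) →
        (∀ t ∈ Set.Icc ((m : ℝ) / σ) ((n : ℝ) / σ),
          ∀ t' ∈ Set.Icc ((m : ℝ) / σ) ((n : ℝ) / σ), |a t - a t'| ≤ K * |t - t'|) →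
        |(∫ t in ((m : ℝ) / σ)..((n : ℝ) / σ), |a t * f ((σ : ℝ) * t)| ^ q) ^ (1 / q)
            - (∫ t in ((m : ℝ) / σ)..((n : ℝ) / σ), |a t| ^ q) ^ (1 / q)
              * (∫ s in (0 : ℝ)..1, |f s| ^ q) ^ (1 / q)|
          ≤ C * (σ : ℝ) ^ (-(1 / q)) * (((n : ℝ) - m) / σ) ^ (1 / q) * (M + K)
            * (∫ s in (0 : ℝ)..1, |f s| ^ q) ^ (1 / q) := by
  refine ⟨2 * q, by linarith, fun σ hσ m n hmn f a hf hfint M K hM hK => ?_⟩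
  have hσ0 : (0 : ℝ) < σ := by exact_mod_cast hσ
  have hmn' : (m : ℝ) / σ < n / σ := by gcongr
  have hM0 : 0 ≤ M := (abs_nonneg _).trans (hM _ ⟨le_rfl, hmn'.le⟩)
  have hK0 : 0 ≤ K := nonneg_of_mul_nonneg_left
    ((abs_nonneg _).trans (hK _ ⟨le_rfl, hmn'.le⟩ _ ⟨hmn'.le, le_rfl⟩))
    (abs_pos.2 (sub_ne_zero.2 hmn'.ne))
  have hL : 0 ≤ q * M ^ (q - 1) * K := by
    have := Real.rpow_nonneg hM0 (q - 1); have : (0 : ℝ) ≤ q := by linarith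
    positivity
  have hn : (n : ℝ) = m + (n - m : ℕ) := by rw [Nat.cast_sub hmn.le]; ring
  have hw := abs_abs_rpow_sub_abs_rpow_le hq hM hK
  rw [hn] at hw
  have key := abs_rpow_integral_mul_comp_mul_sub_le (g := fun s => |f s| ^ q) hσ0
    (by positivity) ((div_le_one (by linarith)).2 hq) (fun s => by simp only [hf s])
    ((intervalIntegrable_iff_integrableOn_Icc_of_le zero_le_one).2 hfint)
    (fun s => Real.rpow_nonneg (abs_nonneg _) q) (fun t => Real.rpow_nonneg (abs_nonneg _) q) hL hw
  rw [← hn, Nat.cast_sub hmn.le] at key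
  simp only [abs_mul, Real.mul_rpow (abs_nonneg _) (abs_nonneg _)]
  refine key.trans (mul_le_mul_of_nonneg_right ?_
    (Real.rpow_nonneg (integral_nonneg zero_le_one fun s _ => by positivity) _))
  have := Real.rpow_one_div_mul_rpow_sub_one_mul_div_mul_le hq hM0 hK0 hσ0.le
    (div_nonneg (sub_nonneg.2 (Nat.cast_le.2 hmn.le)) hσ0.le)
  linarith
end
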